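/- Let T = T_h^k be a perfect k-ary tree with k ≥ 2 and h ≥ 1, and let f be an independent broadcast on T of maximum weight (an α_b-broadcast). Then every leaf of T hears some broadcasting leaf; that is, for every leaf l there exists a leaf l' with f(l') > 0 and d(l, l') ≤ f(l'). -/

import Mathlib

variable {V : Type*}

/-- The eccentricity of a vertex: the maximum distance to any vertex. -/
noncomputable def ecc (G : SimpleGraph V) [Fintype V] (v : V) : ℕ :=
  Finset.univ.sup (fun u => G.dist u v)

/-- A broadcast on `G`: a function assigning each vertex a power at most its eccentricity. -/
def IsBroadcast (G : SimpleGraph V) [Fintype V] (f : V → ℕ) : Prop :=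
  ∀ v, f v ≤ ecc G v

/-- `u` hears the broadcasting vertex `v`. -/
def Hears (G : SimpleGraph V) (f : V → ℕ) (u v : V) : Prop :=
  0 < f v ∧ G.dist u v ≤ f v

/-- An independent broadcast: no broadcasting vertex hears another vertex. -/
def IsIndepBroadcast (G : SimpleGraph V) [Fintype V] (f : V → ℕ) : Prop :=
  IsBroadcast G f ∧ ∀ v w, 0 < f v → v ≠ w → ¬ Hears G f v w

/-- The broadcast independence number: the maximum weight of an independent broadcast. -/
noncomputable def alphaB (G : SimpleGraph V) [Fintype V] : ℕ :=
  sSup {w | ∃ f, IsIndepBroadcast G f ∧ w = ∑ v, f v}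

/-- Vertices of the perfect `k`-ary tree of height `h`: strings of length at most `h`
over a `k`-letter alphabet. -/
abbrev KVert (k h : ℕ) : Type := {l : List (Fin k) // l.length ≤ h}

noncomputable instance (k h : ℕ) : Fintype (KVert k h) :=
  (List.finite_length_le (Fin k) h).fintype

/-- The perfect `k`-ary tree of height `h`: each string of length less than `h` is
adjacent to its `k` one-letter extensions. -/
def karyTree (k h : ℕ) : SimpleGraph (KVert k h) where
  Adj x y := (∃ a : Fin k, x.1 = a :: y.1) ∨ (∃ a : Fin k, y.1 = a :: x.1)
  symm := ⟨fun x y hxy => hxy.symm⟩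
  loopless := by
    constructor
    rintro x (⟨a, ha⟩ | ⟨a, ha⟩) <;>
    · have := congrArg List.length ha
      rw [List.length_cons] at this
      omega

/-- A leaf of the perfect `k`-ary tree of height `h`: a string of length `h`. -/
def IsKLeaf (k h : ℕ) (v : KVert k h) : Prop := v.1.length = h

/-!
Let `f` be a maximum independent broadcast. A leaf hearing no broadcasting vertex could itself
broadcast with power 1, so every leaf `l` hears some broadcasting vertex `v`. A broadcasting
vertex `w` of depth `< h` with no broadcasting vertex strictly below it could move its broadcast
down to a leaf `u` below it with power raised by `h - |w|`, because every other broadcasting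
vertex lies outside the subtree of `w` and is thus `h - |w|` farther from `u` than from `w`.
Hence below `v` lies a broadcasting leaf `w`; if `w ≠ v`, independence would give
`f v < d(w, v) = h - |v| ≤ d(l, v) ≤ f v`. So `v` is itself a leaf.
-/

namespace SimpleGraph

variable {G : SimpleGraph V} {u v : V}

theorem Adj.dist_le_dist_add_one (hadj : G.Adj u v) (w : V) : G.dist u w ≤ G.dist v w + 1 := by
  rw [dist_comm, dist_comm (u := v)]
  rcases hadj.symm.diff_dist_adj (u := w) with h | h | h <;> omega

theorem Walk.sub_le_length {φ : V → ℤ} (hφ : ∀ x y, G.Adj x y → φ x ≤ φ y + 1)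
    (p : G.Walk u v) : φ u - φ v ≤ p.length := by
  induction p with
  | nil => simp
  | cons hadj p ih =>
    have := hφ _ _ hadj
    rw [Walk.length_cons]
    push_cast
    omega

theorem Reachable.sub_le_dist {φ : V → ℤ} (hφ : ∀ x y, G.Adj x y → φ x ≤ φ y + 1)
    (huv : G.Reachable u v) : φ u - φ v ≤ G.dist u v := by
  obtain ⟨p, hp⟩ := huv.exists_walk_length_eq_dist
  exact hp ▸ p.sub_le_length hφ

end SimpleGraph

section Broadcast

variable [Fintype V] {G : SimpleGraph V} {f g : V → ℕ}

theorem dist_le_ecc (u v : V) : G.dist u v ≤ ecc G v :=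
  Finset.le_sup (f := fun z => G.dist z v) (Finset.mem_univ u)

theorem sum_le_alphaB (hf : IsIndepBroadcast G f) : ∑ v, f v ≤ alphaB G := by
  refine le_csSup ⟨∑ v, ecc G v, ?_⟩ ⟨f, hf, rfl⟩
  rintro _ ⟨g, hg, rfl⟩
  exact Finset.sum_le_sum fun v _ => hg.1 v

theorem IsIndepBroadcast.lt_dist (hf : IsIndepBroadcast G f) {v w : V} (hv : 0 < f v)
    (hw : 0 < f w) (hne : v ≠ w) : f w < G.dist v w := by
  by_contra! hle
  exact hf.2 v w hv hne ⟨hw, hle⟩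

theorem IsIndepBroadcast.mono (hf : IsIndepBroadcast G f) (hgf : g ≤ f) :
    IsIndepBroadcast G g :=
  ⟨fun v => (hgf v).trans (hf.1 v), fun v w hv hne hw =>
    hf.2 v w (hv.trans_le (hgf v)) hne ⟨hw.1.trans_le (hgf w), hw.2.trans (hgf w)⟩⟩

theorem IsIndepBroadcast.update [DecidableEq V] (hf : IsIndepBroadcast G f) {u : V} {p : ℕ}
    (hp : p ≤ ecc G u)
    (hsep : ∀ v, v ≠ u → 0 < f v → p < G.dist u v ∧ f v < G.dist u v) :
    IsIndepBroadcast G (Function.update f u p) := by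
  refine ⟨fun v => ?_, fun v w hv hne ⟨hw, hvw⟩ => ?_⟩
  · rcases eq_or_ne v u with rfl | hvu
    · simpa using hp
    · simpa [hvu] using hf.1 v
  rcases eq_or_ne v u with rfl | hvu
  · rw [Function.update_of_ne hne.symm] at hw hvw
    exact (hsep w hne.symm hw).2.not_ge hvw
  rcases eq_or_ne w u with rfl | hwu
  · rw [Function.update_of_ne hvu] at hv
    rw [Function.update_self, SimpleGraph.dist_comm] at hvw
    exact (hsep v hvu hv).1.not_ge hvw
  rw [Function.update_of_ne hvu] at hv
  rw [Function.update_of_ne hwu] at hw hvw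
  exact hf.2 v w hv hne ⟨hw, hvw⟩

theorem sum_update_add_self [DecidableEq V] (f : V → ℕ) (u : V) (p : ℕ) :
    ∑ v, Function.update f u p v + f u = ∑ v, f v + p := by
  rw [Finset.sum_update_of_mem (Finset.mem_univ u),
    Finset.sum_eq_add_sum_sdiff_singleton_of_mem (Finset.mem_univ u) f]
  ring

end Broadcast

namespace karyTree

/- A string is read from right to left: the parent of `a :: s` is `s`, so `w.1 <:+ x.1` says
that `x` lies in the subtree rooted at `w`. -/

variable {k h : ℕ}

theorem length_eq_succ_or_of_adj {x y : KVert k h} (hxy : (karyTree k h).Adj x y) :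
    x.1.length = y.1.length + 1 ∨ y.1.length = x.1.length + 1 := by
  rcases hxy with ⟨a, ha⟩ | ⟨a, ha⟩ <;> simp [ha]

theorem eq_of_adj_of_suffix_of_not_suffix {x y : KVert k h} {w : List (Fin k)}
    (hxy : (karyTree k h).Adj x y) (hx : w <:+ x.1) (hy : ¬ w <:+ y.1) : x.1 = w := by
  rcases hxy with ⟨a, ha⟩ | ⟨a, ha⟩
  · rw [ha] at hx ⊢
    exact ((List.suffix_cons_iff.mp hx).resolve_right hy).symm
  · exact absurd (hx.trans (ha ▸ List.suffix_cons a x.1)) hy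

theorem exists_walk_of_suffix {x y : KVert k h} (hyx : y.1 <:+ x.1) :
    ∃ p : (karyTree k h).Walk x y, p.length = x.1.length - y.1.length := by
  obtain ⟨t, ht⟩ := hyx
  induction t generalizing x with
  | nil =>
    obtain rfl : x = y := Subtype.ext (by simpa using ht.symm)
    exact ⟨.nil, by simp⟩
  | cons a t ih =>
    have hlen : (t ++ y.1).length ≤ h := by
      have := x.2
      rw [← ht] at this
      simp only [List.cons_append, List.length_cons] at this
      omega
    obtain ⟨p, hp⟩ := ih (x := ⟨t ++ y.1, hlen⟩) rfl
    have hadj : (karyTree k h).Adj x ⟨t ++ y.1, hlen⟩ :=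
      Or.inl ⟨a, by rw [← ht, List.cons_append]⟩
    refine ⟨.cons hadj p, ?_⟩
    simp only [SimpleGraph.Walk.length_cons, hp, ← ht, List.length_cons, List.length_append]
    omega

theorem connected : (karyTree k h).Connected := by
  let root : KVert k h := ⟨[], Nat.zero_le h⟩
  have reach (x : KVert k h) : (karyTree k h).Reachable x root :=
    (exists_walk_of_suffix (y := root) List.nil_suffix).elim fun p _ => ⟨p⟩
  exact @SimpleGraph.Connected.mk _ _ (fun x y => (reach x).trans (reach y).symm) ⟨root⟩

theorem length_le_dist_add_length (x y : KVert k h) :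
    x.1.length ≤ (karyTree k h).dist x y + y.1.length := by
  have := (connected.preconnected x y).sub_le_dist (φ := fun z => (z.1.length : ℤ))
    fun a b hab => by rcases length_eq_succ_or_of_adj hab with h | h <;> omega
  omega

theorem dist_of_suffix {x y : KVert k h} (hyx : y.1 <:+ x.1) :
    (karyTree k h).dist x y = x.1.length - y.1.length := by
  obtain ⟨p, hp⟩ := exists_walk_of_suffix hyx
  have := length_le_dist_add_length x y
  have := hp ▸ SimpleGraph.dist_le p
  omega

/-- A path from inside the subtree rooted at `w` to a vertex outside it passes through `w`. -/
theorem length_sub_add_dist_le_dist {u w q : KVert k h} (hwu : w.1 <:+ u.1)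
    (hwq : ¬ w.1 <:+ q.1) :
    u.1.length - w.1.length + (karyTree k h).dist w q ≤ (karyTree k h).dist u q := by
  let φ : KVert k h → ℤ := fun x =>
    if w.1 <:+ x.1 then x.1.length - w.1.length + (karyTree k h).dist w q
    else (karyTree k h).dist x q
  have hφ x y (hxy : (karyTree k h).Adj x y) : φ x ≤ φ y + 1 := by
    have hdist := hxy.dist_le_dist_add_one q
    have hlen := length_eq_succ_or_of_adj hxy
    by_cases hx : w.1 <:+ x.1 <;> by_cases hy : w.1 <:+ y.1 <;>
      simp only [φ, hx, hy, if_true, if_false]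
    · omega
    · obtain rfl : x = w := Subtype.ext (eq_of_adj_of_suffix_of_not_suffix hxy hx hy)
      simp only [sub_self, zero_add]
      omega
    · obtain rfl : y = w := Subtype.ext (eq_of_adj_of_suffix_of_not_suffix hxy.symm hy hx)
      simp only [sub_self, zero_add]
      omega
    · omega
  have hpot := (connected.preconnected u q).sub_le_dist hφ
  simp only [φ, hwu, hwq, if_true, if_false, SimpleGraph.dist_self] at hpot
  have := hwu.length_le
  omega

theorem ecc_le (v : KVert k h) : ecc (karyTree k h) v ≤ h + v.1.length := by
  refine Finset.sup_le fun z _ => ?_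
  let root : KVert k h := ⟨[], Nat.zero_le h⟩
  calc (karyTree k h).dist z v
      ≤ (karyTree k h).dist z root + (karyTree k h).dist root v := connected.dist_triangle
    _ = z.1.length + v.1.length := by
      rw [SimpleGraph.dist_comm (u := root), dist_of_suffix List.nil_suffix,
        dist_of_suffix List.nil_suffix]
      rfl
    _ ≤ h + v.1.length := by have := z.2; omega

/-- A leaf `u` is at distance `2h` from any leaf whose root letter differs from that of `u`. -/
theorem two_mul_le_ecc (hk : 2 ≤ k) (hh : 1 ≤ h) {u : KVert k h} (hu : IsKLeaf k h u) :
    2 * h ≤ ecc (karyTree k h) u := by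
  obtain ⟨s, c, hs⟩ : ∃ s c, u.1 = s ++ [c] := by
    rcases List.eq_nil_or_concat' u.1 with hnil | hcons
    · have : u.1.length = h := hu
      simp [hnil] at this
      omega
    · exact hcons
  obtain ⟨c', hc'⟩ := Fintype.exists_ne_of_one_lt_card (by simp; omega) c
  let z : KVert k h := ⟨List.replicate (h - 1) c' ++ [c'], by simp; omega⟩
  let w : KVert k h := ⟨[c], hh⟩
  let w' : KVert k h := ⟨[c'], hh⟩
  have hwu : w.1 <:+ u.1 := hs ▸ List.suffix_append s [c]
  have hw'z : w'.1 <:+ z.1 := List.suffix_append _ _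
  have hwz : ¬ w.1 <:+ z.1 := fun h' => hc' (Eq.symm (by simpa [w, z] using h'))
  have hw'w : ¬ w'.1 <:+ w.1 := fun h' => hc' (List.singleton_injective (h'.eq_of_length rfl))
  have hww' : 1 < (karyTree k h).dist w' w := by
    refine connected.one_lt_dist_of_ne_of_not_adj (fun e => hc' ?_) fun hadj => ?_
    · simpa [w, w'] using congrArg Subtype.val e
    · simpa [w, w'] using length_eq_succ_or_of_adj hadj
  have h1 := length_sub_add_dist_le_dist hwu hwz
  have h2 := length_sub_add_dist_le_dist hw'z hw'w
  have h3 := dist_le_ecc (G := karyTree k h) z u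
  have hzlen : z.1.length = h := by simp [z]; omega
  have hulen : u.1.length = h := hu
  have hwlen : w.1.length = 1 := rfl
  have hw'len : w'.1.length = 1 := rfl
  rw [SimpleGraph.dist_comm (u := w)] at h1
  rw [SimpleGraph.dist_comm (u := z)] at h3
  omega

theorem exists_isKLeaf_suffix (hk : 0 < k) (w : KVert k h) :
    ∃ u, IsKLeaf k h u ∧ w.1 <:+ u.1 := by
  have := w.2
  exact ⟨⟨List.replicate (h - w.1.length) ⟨0, hk⟩ ++ w.1, by simp; omega⟩,
    by simp [IsKLeaf]; omega, List.suffix_append _ _⟩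

theorem exists_hears_of_isKLeaf (hk : 2 ≤ k) (hh : 1 ≤ h) {f : KVert k h → ℕ}
    (hf : IsIndepBroadcast (karyTree k h) f)
    (hmax : ∀ g, IsIndepBroadcast (karyTree k h) g → ∑ v, g v ≤ ∑ v, f v)
    {l : KVert k h} (hl : IsKLeaf k h l) : ∃ v, Hears (karyTree k h) f l v := by
  by_contra! hdeaf
  have hfl : f l = 0 := by
    by_contra hfl
    exact hdeaf l ⟨Nat.pos_of_ne_zero hfl, by simp⟩
  have hsep v (_ : v ≠ l) (hv : 0 < f v) :
      1 < (karyTree k h).dist l v ∧ f v < (karyTree k h).dist l v := by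
    have : f v < (karyTree k h).dist l v := by
      by_contra! hle
      exact hdeaf v ⟨hv, hle⟩
    omega
  have hg := hf.update (by have := two_mul_le_ecc hk hh hl; omega) hsep
  have := hmax _ hg
  have := sum_update_add_self f l 1
  omega

theorem exists_ne_suffix_pos_of_length_lt (hk : 2 ≤ k) {f : KVert k h → ℕ}
    (hf : IsIndepBroadcast (karyTree k h) f)
    (hmax : ∀ g, IsIndepBroadcast (karyTree k h) g → ∑ v, g v ≤ ∑ v, f v)
    {w : KVert k h} (hw : w.1.length < h) (hfw : 0 < f w) :
    ∃ q, q ≠ w ∧ w.1 <:+ q.1 ∧ 0 < f q := by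
  by_contra! hnone
  obtain ⟨u, hu, hwu⟩ := exists_isKLeaf_suffix (by omega) w
  have hulen : u.1.length = h := hu
  have huw : u ≠ w := by
    rintro rfl
    omega
  let g := Function.update f w 0
  have hg : IsIndepBroadcast (karyTree k h) g :=
    hf.mono (update_le_self_iff.mpr (Nat.zero_le _))
  have hsep q (_ : q ≠ u) (hq : 0 < g q) :
      f w + (h - w.1.length) < (karyTree k h).dist u q ∧ g q < (karyTree k h).dist u q := by
    have hqw : q ≠ w := by
      rintro rfl
      simp [g] at hq
    have hgq : g q = f q := Function.update_of_ne hqw _ _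
    rw [hgq] at hq ⊢
    have hwq : ¬ w.1 <:+ q.1 := fun hwq => (hnone q hqw hwq).not_gt hq
    have h1 := length_sub_add_dist_le_dist hwu hwq
    have h2 := hf.lt_dist hfw hq hqw.symm
    have h3 := hf.lt_dist hq hfw hqw
    rw [SimpleGraph.dist_comm] at h3
    omega
  have hecc : f w + (h - w.1.length) ≤ ecc (karyTree k h) u := by
    have := (hf.1 w).trans (ecc_le w)
    have := two_mul_le_ecc hk (by omega) hu
    omega
  have := hmax _ (hg.update hecc hsep)
  have := sum_update_add_self g u (f w + (h - w.1.length))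
  have : ∑ v, g v + f w = ∑ v, f v + 0 := sum_update_add_self f w 0
  have : g u = 0 := by simpa [g, Function.update_of_ne huw] using hnone u huw hwu
  omega

theorem exists_isKLeaf_suffix_pos (hk : 2 ≤ k) {f : KVert k h → ℕ}
    (hf : IsIndepBroadcast (karyTree k h) f)
    (hmax : ∀ g, IsIndepBroadcast (karyTree k h) g → ∑ v, g v ≤ ∑ v, f v)
    {v : KVert k h} (hv : 0 < f v) : ∃ w, IsKLeaf k h w ∧ v.1 <:+ w.1 ∧ 0 < f w := by
  obtain ⟨w, hw, hdeepest⟩ := (Finset.univ.filter fun q => v.1 <:+ q.1 ∧ 0 < f q)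
    |>.exists_max_image (fun q => q.1.length) ⟨v, by simp [hv]⟩
  simp only [Finset.mem_filter, Finset.mem_univ, true_and] at hw hdeepest
  refine ⟨w, ?_, hw⟩
  by_contra hleaf
  obtain ⟨q, hqw, hwq, hq⟩ :=
    exists_ne_suffix_pos_of_length_lt hk hf hmax (lt_of_le_of_ne w.2 hleaf) hw.2
  have := hdeepest q ⟨hw.1.trans hwq, hq⟩
  exact hqw (Subtype.ext (hwq.eq_of_length (le_antisymm hwq.length_le this)).symm)

end karyTree

open karyTree in
/-- in a maximum-weight independent broadcast on a perfect `k`-ary tree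
(`k ≥ 2`, `h ≥ 1`), every leaf hears some broadcasting leaf. -/
theorem stmt2 (k h : ℕ) (hk : 2 ≤ k) (hh : 1 ≤ h) (f : KVert k h → ℕ)
    (hf : IsIndepBroadcast (karyTree k h) f) (hmax : ∑ v, f v = alphaB (karyTree k h)) :
    ∀ l : KVert k h, IsKLeaf k h l →
      ∃ l' : KVert k h, IsKLeaf k h l' ∧ 0 < f l' ∧ (karyTree k h).dist l l' ≤ f l' := by
  intro l hl
  have hmax' g (hg : IsIndepBroadcast (karyTree k h) g) : ∑ v, g v ≤ ∑ v, f v :=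
    hmax ▸ sum_le_alphaB hg
  obtain ⟨v, hv, hlv⟩ := exists_hears_of_isKLeaf hk hh hf hmax' hl
  obtain ⟨w, hw, hvw, hfw⟩ := exists_isKLeaf_suffix_pos hk hf hmax' hv
  refine ⟨v, ?_, hv, hlv⟩
  by_contra hvleaf
  have hwv : w ≠ v := by
    rintro rfl
    exact hvleaf hw
  -- the leaf `w` is no farther from `v` than the leaf `l`, which hears `v`
  have hvw' := hf.lt_dist hfw hv hwv
  rw [dist_of_suffix hvw] at hvw'
  have := length_le_dist_add_length l v
  have hllen : l.1.length = h := hl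
  have hwlen : w.1.length = h := hw
  omega
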